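/- arXiv:1909.10862 — 2 statements merged into one kernel-verified Lean document; each statement's English description precedes it below -/
import Mathlib

section
/- Consider an urn model with K colors satisfying Assumption 1. Suppose either (i) Assumption 2(a) holds with majorizing variable R satisfying E(R log_+ R) < ∞, or (ii) Assumption 2(b) holds. Then (1/n) Σ_{k=1}^n E[ ‖R_k‖ 1{‖R_k‖ > k} | F_{k−1} ] → 0 almost surely. -/
open MeasureTheory Filter
open scoped Topology ENNReal

noncomputable section

/-!
Write `X_k = ‖R_k‖ 1{‖R_k‖ > k}`. Conditioning preserves expectations, so `Σ_k E X_k / k < ∞`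
forces `Σ_k E[X_k | F_{k-1}] / k < ∞` almost surely, and Kronecker's lemma turns this into
Cesàro convergence to `0`. Under (i) the tail majorization gives `E X_k ≤ c E[R 1{R > k}]`, and
`Σ_k R 1{R > k} / k ≤ R (1 + log_+ R)` is a harmonic-sum bound. Under (ii) Markov's inequality
gives `E X_k ≤ M / φ(k)` once `φ` is positive and monotone, and `Σ_k 1 / (k φ(k)) < ∞`.
-/

/-- Max row-sum norm `‖A‖ = max_i Σ_j |A i j|` of a `K × K` matrix. -/
def matNorm {K : ℕ} (A : Fin K → Fin K → ℝ) : ℝ := ⨆ i, ∑ j, |A i j|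

/-- Irreducibility of a nonnegative square matrix. -/
def MatIrreducible {K : ℕ} (A : Fin K → Fin K → ℝ) : Prop :=
  ∀ i j, ∃ N : ℕ, 1 ≤ N ∧ 0 < (Matrix.of A ^ N) i j

lemma measurable_matNorm {K : ℕ} : Measurable (matNorm : (Fin K → Fin K → ℝ) → ℝ) :=
  Measurable.iSup fun i => Finset.measurable_sum _ fun j _ =>
    ((measurable_pi_apply j).comp (measurable_pi_apply i)).abs

lemma Finset.sum_Icc_one_eq_sum_range {M : Type*} [AddCommMonoid M] (f : ℕ → M) (n : ℕ) :
    ∑ k ∈ Finset.Icc 1 n, f k = ∑ j ∈ Finset.range n, f (j + 1) := by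
  rw [← Finset.Ico_add_one_right_eq_Icc, Finset.sum_Ico_eq_sum_range, Nat.add_sub_cancel]
  simp only [add_comm 1]

lemma ENNReal.ofReal_div_natCast_add_one (x : ℝ) (k : ℕ) :
    ENNReal.ofReal (x / (k + 1)) = ENNReal.ofReal x / (k + 1) := by
  rw [ENNReal.ofReal_div_of_pos (by positivity)]
  norm_cast

lemma ENNReal.tsum_ne_top_of_eventually_le {f g : ℕ → ℝ≥0∞} (hf : ∀ k, f k ≠ ⊤)
    (hg : ∑' k, g k ≠ ⊤) (hfg : ∀ᶠ k in atTop, f k ≤ g k) : ∑' k, f k ≠ ⊤ := by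
  obtain ⟨N, hN⟩ := eventually_atTop.1 hfg
  rw [← ENNReal.summable.sum_add_tsum_nat_add' (k := N)]
  refine ENNReal.add_ne_top.2 ⟨ENNReal.sum_ne_top.2 fun k _ => hf k, ne_top_of_le_ne_top hg ?_⟩
  calc ∑' k, f (k + N) ≤ ∑' k, g (k + N) := ENNReal.tsum_le_tsum fun k => hN _ (N.le_add_left k)
    _ ≤ ∑' k, g k := ENNReal.tsum_comp_le_tsum_of_injective (add_left_injective N) g

/-- Kronecker's lemma for an absolutely convergent `Σ a_j / (j + 1)`: the Cesàro mean is the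
series `Σ_j 1{j < n} a_j / n`, which tends to `0` by dominated convergence. -/
lemma tendsto_inv_mul_sum_range_of_summable_abs_div {a : ℕ → ℝ}
    (ha : Summable fun j : ℕ => |a j| / (j + 1)) :
    Tendsto (fun n : ℕ => (n : ℝ)⁻¹ * ∑ j ∈ Finset.range n, a j) atTop (𝓝 0) := by
  have hmean : ∀ n : ℕ, (n : ℝ)⁻¹ * ∑ j ∈ Finset.range n, a j
      = ∑' j, if j < n then a j / n else 0 := by
    intro n
    rw [tsum_eq_sum (s := Finset.range n) fun j hj => if_neg (by simpa using hj),
      Finset.mul_sum]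
    exact Finset.sum_congr rfl fun j hj => by
      rw [if_pos (Finset.mem_range.1 hj), inv_mul_eq_div]
  have hlim : Tendsto (fun n : ℕ => ∑' j, if j < n then a j / n else 0) atTop
      (𝓝 (∑' _ : ℕ, (0 : ℝ))) := by
    refine tendsto_tsum_of_dominated_convergence ha (fun j => ?_)
      (Eventually.of_forall fun n j => ?_)
    · exact (tendsto_const_div_atTop_nhds_zero_nat (a j)).congr'
        ((eventually_gt_atTop j).mono fun n hn => (if_pos hn).symm)
    · split_ifs with h
      · rw [norm_div, Real.norm_eq_abs, Real.norm_natCast]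
        gcongr
        exact_mod_cast h
      · rw [norm_zero]
        positivity
  simpa only [hmean, tsum_zero] using hlim

lemma sum_range_inv_add_one_le_one_add_log (m : ℕ) :
    ∑ k ∈ Finset.range m, ((k : ℝ) + 1)⁻¹ ≤ 1 + Real.log m := by
  simpa [harmonic] using harmonic_le_one_add_log m

section TailPart

def tailPart (t x : ℝ) : ℝ := x * if t < x then 1 else 0

lemma tailPart_nonneg {t : ℝ} (ht : 0 ≤ t) (x : ℝ) : 0 ≤ tailPart t x := by
  unfold tailPart
  split_ifs <;> linarith

lemma tailPart_le_self {x : ℝ} (hx : 0 ≤ x) (t : ℝ) : tailPart t x ≤ x := by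
  unfold tailPart
  split_ifs <;> linarith

lemma tailPart_le_add_tailPart {s t : ℝ} (ht : 0 ≤ t) (x : ℝ) :
    tailPart s x ≤ t + tailPart t x := by
  unfold tailPart
  split_ifs <;> linarith

lemma tailPart_eq_zero_of_le {t x : ℝ} (h : x ≤ t) : tailPart t x = 0 := by
  simp [tailPart, h.not_gt]

lemma lt_tailPart_iff {s t x : ℝ} (hs : 0 ≤ s) : s < tailPart t x ↔ max s t < x := by
  unfold tailPart
  split_ifs with h
  · simp [h]
  · simp only [mul_zero, max_lt_iff]
    exact ⟨fun h' => absurd h' hs.not_gt, fun h' => absurd h'.2 h⟩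

lemma measurable_tailPart (t : ℝ) : Measurable (tailPart t) :=
  measurable_id.mul (Measurable.ite measurableSet_Ioi measurable_const measurable_const)

/-- Only the `k < ⌊r⌋₊` terms survive, and each is at most `r / (k + 1)`. -/
lemma tsum_ofReal_tailPart_div_le (r : ℝ) :
    ∑' k : ℕ, ENNReal.ofReal (tailPart (k + 1) r) / (k + 1)
      ≤ ENNReal.ofReal (r * (1 + max (Real.log r) 0)) := by
  rcases le_or_gt r 0 with hr | hr
  · have hzero : ∀ k : ℕ, tailPart (k + 1) r = 0 := fun k =>
      tailPart_eq_zero_of_le (by linarith [k.cast_nonneg (α := ℝ)])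
    simp [hzero]
  have hsupp : ∀ k ∉ Finset.range ⌊r⌋₊, ENNReal.ofReal (tailPart (k + 1) r / (k + 1)) = 0 := by
    intro k hk
    have hk' : (⌊r⌋₊ : ℝ) ≤ k := by exact_mod_cast not_lt.1 (Finset.mem_range.not.1 hk)
    rw [tailPart_eq_zero_of_le (by linarith [Nat.lt_floor_add_one r]), zero_div,
      ENNReal.ofReal_zero]
  simp only [← ENNReal.ofReal_div_natCast_add_one]
  rw [tsum_eq_sum hsupp, ← ENNReal.ofReal_sum_of_nonneg fun k _ =>
    div_nonneg (tailPart_nonneg (by positivity) r) (by positivity)]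
  refine ENNReal.ofReal_le_ofReal ?_
  calc ∑ k ∈ Finset.range ⌊r⌋₊, tailPart (k + 1) r / (k + 1)
      ≤ ∑ k ∈ Finset.range ⌊r⌋₊, r * ((k : ℝ) + 1)⁻¹ := by
        gcongr with k
        rw [div_eq_mul_inv]
        gcongr
        exact tailPart_le_self hr.le _
    _ ≤ r * (1 + Real.log ⌊r⌋₊) := by
        rw [← Finset.mul_sum]
        exact mul_le_mul_of_nonneg_left (sum_range_inv_add_one_le_one_add_log _) hr.le
    _ ≤ r * (1 + max (Real.log r) 0) := by
        gcongr
        rcases Nat.eq_zero_or_pos ⌊r⌋₊ with h0 | hpos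
        · simp [h0]
        · exact (Real.log_le_log (by exact_mod_cast hpos) (Nat.floor_le hr.le)).trans
            (le_max_left _ _)

lemma ofReal_tailPart_le_div {φ : ℝ → ℝ} {t : ℝ} (ht : 0 ≤ t) (hφt : 0 < φ t)
    (hφ : ∀ y, t ≤ y → φ t ≤ φ y) (x : ℝ) :
    ENNReal.ofReal (tailPart t x) ≤ ENNReal.ofReal (x * φ x) / ENNReal.ofReal (φ t) := by
  by_cases h : t < x
  · rw [← ENNReal.ofReal_div_of_pos hφt]
    refine ENNReal.ofReal_le_ofReal ?_
    rw [tailPart, if_pos h, mul_one, le_div_iff₀ hφt]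
    exact mul_le_mul_of_nonneg_left (hφ x h.le) (ht.trans h.le)
  · simp [tailPart, h]

end TailPart

section

variable {Ω : Type*} {m0 : MeasurableSpace Ω} {μ : Measure Ω}

lemma lintegral_ofReal_condExp {m : MeasurableSpace Ω} (hm : m ≤ m0)
    [SigmaFinite (μ.trim hm)] {f : Ω → ℝ} (hf : Integrable f μ) (hf_nonneg : 0 ≤ᵐ[μ] f) :
    ∫⁻ ω, ENNReal.ofReal (μ[f | m] ω) ∂μ = ∫⁻ ω, ENNReal.ofReal (f ω) ∂μ := by
  rw [← ofReal_integral_eq_lintegral_ofReal integrable_condExp (condExp_nonneg hf_nonneg),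
    ← ofReal_integral_eq_lintegral_ofReal hf hf_nonneg, integral_condExp hm]

lemma ae_tsum_ne_top_of_tsum_lintegral_ne_top {ι : Type*} [Countable ι]
    {f : ι → Ω → ℝ≥0∞} (hf : ∀ i, AEMeasurable (f i) μ) (h : ∑' i, ∫⁻ ω, f i ω ∂μ ≠ ⊤) :
    ∀ᵐ ω ∂μ, ∑' i, f i ω ≠ ⊤ := by
  rw [← lintegral_tsum hf] at h
  filter_upwards [ae_lt_top' (AEMeasurable.tsum hf) h] with ω hω using hω.ne

theorem ae_tendsto_inv_mul_sum_condExp [IsFiniteMeasure μ] {m : ℕ → MeasurableSpace Ω}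
    (hm : ∀ j, m j ≤ m0) {Y : ℕ → Ω → ℝ} (hY_nonneg : ∀ j, 0 ≤ Y j)
    (hY_meas : ∀ j, AEStronglyMeasurable (Y j) μ)
    (hY : ∑' j : ℕ, (∫⁻ ω, ENNReal.ofReal (Y j ω) ∂μ) / (j + 1) ≠ ⊤) :
    ∀ᵐ ω ∂μ, Tendsto (fun n : ℕ => (n : ℝ)⁻¹ * ∑ j ∈ Finset.range n, μ[Y j | m j] ω)
      atTop (𝓝 0) := by
  have hY_int : ∀ j, Integrable (Y j) μ := by
    refine fun j => ⟨hY_meas j, ?_⟩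
    rw [hasFiniteIntegral_iff_ofReal (ae_of_all _ (hY_nonneg j)), lt_top_iff_ne_top]
    intro h
    apply ENNReal.ne_top_of_tsum_ne_top hY j
    rw [h, ENNReal.top_div_of_ne_top (by simp)]
  have hcond_nonneg : ∀ᵐ ω ∂μ, ∀ j, 0 ≤ μ[Y j | m j] ω :=
    ae_all_iff.2 fun j => condExp_nonneg (ae_of_all _ (hY_nonneg j))
  have hcond_sum : ∀ᵐ ω ∂μ, ∑' j : ℕ, ENNReal.ofReal (μ[Y j | m j] ω) / (j + 1) ≠ ⊤ := by
    refine ae_tsum_ne_top_of_tsum_lintegral_ne_top (fun j => ?_) ?_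
    · exact ((stronglyMeasurable_condExp.mono (hm j)).measurable.ennreal_ofReal.div_const
        _).aemeasurable
    · have hterm : ∀ j : ℕ, ∫⁻ ω, ENNReal.ofReal (μ[Y j | m j] ω) / (j + 1) ∂μ
          = (∫⁻ ω, ENNReal.ofReal (Y j ω) ∂μ) / (j + 1) := fun j => by
        simp only [div_eq_mul_inv]
        rw [lintegral_mul_const' _ _ (by simp),
          lintegral_ofReal_condExp (hm j) (hY_int j) (ae_of_all _ (hY_nonneg j))]
      simpa only [hterm] using hY
  filter_upwards [hcond_nonneg, hcond_sum] with ω h_nonneg h_sum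
  refine tendsto_inv_mul_sum_range_of_summable_abs_div ?_
  convert ENNReal.summable_toReal h_sum using 2 with j
  rw [abs_of_nonneg (h_nonneg j), ENNReal.toReal_div, ENNReal.toReal_ofReal (h_nonneg j)]
  norm_cast

lemma lintegral_ofReal_tailPart_le_of_meas_lt_le {f g : Ω → ℝ} (hf : AEMeasurable f μ)
    (hg : AEMeasurable g μ) {c : ℝ≥0∞}
    (hfg : ∀ x : ℝ, 0 < x → μ {ω | x < f ω} ≤ c * μ {ω | x < g ω}) {t : ℝ} (ht : 0 ≤ t) :
    ∫⁻ ω, ENNReal.ofReal (tailPart t (f ω)) ∂μ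
      ≤ c * ∫⁻ ω, ENNReal.ofReal (tailPart t (g ω)) ∂μ := by
  have hanti : Antitone fun s : ℝ => μ {ω | s < tailPart t (g ω)} :=
    fun s s' hss' => measure_mono fun ω (hω : s' < _) => hss'.trans_lt hω
  rw [lintegral_eq_lintegral_meas_lt μ (ae_of_all _ fun ω => tailPart_nonneg ht _)
      ((measurable_tailPart t).comp_aemeasurable hf),
    lintegral_eq_lintegral_meas_lt μ (ae_of_all _ fun ω => tailPart_nonneg ht _)
      ((measurable_tailPart t).comp_aemeasurable hg),
    ← lintegral_const_mul'' _ hanti.measurable.aemeasurable]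
  refine setLIntegral_mono' measurableSet_Ioi fun s (hs : 0 < s) => ?_
  simp only [lt_tailPart_iff hs.le]
  exact hfg _ (hs.trans_le (le_max_left _ _))

theorem tsum_lintegral_tailPart_div_ne_top_of_meas_lt_le {f : ℕ → Ω → ℝ}
    (hf : ∀ k, AEMeasurable (f k) μ) {g : Ω → ℝ} (hg : Integrable g μ)
    (hg_log : Integrable (fun ω => g ω * max (Real.log (g ω)) 0) μ) {c : ℝ≥0∞} (hc : c ≠ ⊤)
    (hfg : ∀ k, ∀ x : ℝ, 0 < x → μ {ω | x < f k ω} ≤ c * μ {ω | x < g ω}) :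
    ∑' k : ℕ, (∫⁻ ω, ENNReal.ofReal (tailPart (k + 1) (f k ω)) ∂μ) / (k + 1) ≠ ⊤ := by
  have hg_tail : ∀ k : ℕ, AEMeasurable (fun ω => ENNReal.ofReal (tailPart (k + 1) (g ω))) μ :=
    fun k => ((measurable_tailPart _).comp_aemeasurable hg.aemeasurable).ennreal_ofReal
  refine ne_top_of_le_ne_top (ENNReal.mul_ne_top hc (hg.add hg_log).lintegral_lt_top.ne) ?_
  calc ∑' k : ℕ, (∫⁻ ω, ENNReal.ofReal (tailPart (k + 1) (f k ω)) ∂μ) / (k + 1)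
      ≤ ∑' k : ℕ, c * (∫⁻ ω, ENNReal.ofReal (tailPart (k + 1) (g ω)) ∂μ) / (k + 1) :=
        ENNReal.tsum_le_tsum fun k => ENNReal.div_le_div_right
          (lintegral_ofReal_tailPart_le_of_meas_lt_le (hf k) hg.aemeasurable (hfg k)
            (by positivity)) _
    _ = c * ∫⁻ ω, ∑' k : ℕ, ENNReal.ofReal (tailPart (k + 1) (g ω)) / (k + 1) ∂μ := by
        simp only [div_eq_mul_inv, mul_assoc, ENNReal.tsum_mul_left]
        rw [lintegral_tsum fun k => (hg_tail k).mul_const _]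
        congr 1
        exact tsum_congr fun k => (lintegral_mul_const'' _ (hg_tail k)).symm
    _ ≤ c * ∫⁻ ω, ENNReal.ofReal ((g + fun ω => g ω * max (Real.log (g ω)) 0) ω) ∂μ := by
        gcongr with ω
        simpa only [Pi.add_apply, mul_one_add] using tsum_ofReal_tailPart_div_le (g ω)

lemma lintegral_ofReal_tailPart_le_div {f : Ω → ℝ} {φ : ℝ → ℝ} {t : ℝ} (ht : 0 ≤ t)
    (hφt : 0 < φ t) (hφ : ∀ y, t ≤ y → φ t ≤ φ y) :
    ∫⁻ ω, ENNReal.ofReal (tailPart t (f ω)) ∂μ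
      ≤ (∫⁻ ω, ENNReal.ofReal (f ω * φ (f ω)) ∂μ) / ENNReal.ofReal (φ t) := by
  calc ∫⁻ ω, ENNReal.ofReal (tailPart t (f ω)) ∂μ
      ≤ ∫⁻ ω, ENNReal.ofReal (f ω * φ (f ω)) / ENNReal.ofReal (φ t) ∂μ :=
        lintegral_mono fun ω => ofReal_tailPart_le_div ht hφt hφ _
    _ = (∫⁻ ω, ENNReal.ofReal (f ω * φ (f ω)) ∂μ) / ENNReal.ofReal (φ t) := by
        simp only [div_eq_mul_inv]
        exact lintegral_mul_const' _ _ (ENNReal.inv_ne_top.2 (ENNReal.ofReal_pos.2 hφt).ne')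

theorem tsum_lintegral_tailPart_div_ne_top_of_lintegral_le [IsFiniteMeasure μ]
    {f : ℕ → Ω → ℝ} {φ : ℝ → ℝ} (hφ_pos : ∃ x₀, ∀ x, x₀ ≤ x → 0 < φ x)
    (hφ_mono : ∃ x₀, ∀ x y, x₀ ≤ x → x ≤ y → φ x ≤ φ y)
    (hφ_sum : Summable fun n : ℕ => 1 / (n * φ n)) {M : ℝ≥0∞} (hM : M ≠ ⊤)
    (hfM : ∀ k, ∫⁻ ω, ENNReal.ofReal (f k ω * φ (f k ω)) ∂μ ≤ M) :
    ∑' k : ℕ, (∫⁻ ω, ENNReal.ofReal (tailPart (k + 1) (f k ω)) ∂μ) / (k + 1) ≠ ⊤ := by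
  obtain ⟨x₁, hx₁⟩ := hφ_pos
  obtain ⟨x₂, hx₂⟩ := hφ_mono
  set t₀ := max (max x₁ x₂) 0
  have hφ_pos' : ∀ t, t₀ ≤ t → 0 < φ t := fun t ht =>
    hx₁ t ((le_max_left _ _).trans ((le_max_left _ _).trans ht))
  have hmarkov : ∀ k t, t₀ ≤ t →
      ∫⁻ ω, ENNReal.ofReal (tailPart t (f k ω)) ∂μ ≤ M / ENNReal.ofReal (φ t) := fun k t ht =>
    (lintegral_ofReal_tailPart_le_div ((le_max_right _ _).trans ht) (hφ_pos' t ht)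
      fun y => hx₂ t y ((le_max_right _ _).trans ((le_max_left _ _).trans ht))).trans
      (ENNReal.div_le_div_right (hfM k) _)
  refine ENNReal.tsum_ne_top_of_eventually_le
    (g := fun k : ℕ => M * ENNReal.ofReal (1 / ((k + 1 : ℕ) * φ (k + 1 : ℕ))))
    (fun k => ?_) ?_ ?_
  · have hbound : ∫⁻ ω, ENNReal.ofReal (tailPart (k + 1) (f k ω)) ∂μ
        ≤ ENNReal.ofReal t₀ * μ Set.univ + M / ENNReal.ofReal (φ t₀) :=
      calc ∫⁻ ω, ENNReal.ofReal (tailPart (k + 1) (f k ω)) ∂μ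
          ≤ ∫⁻ ω, ENNReal.ofReal t₀ + ENNReal.ofReal (tailPart t₀ (f k ω)) ∂μ :=
            lintegral_mono fun ω => (ENNReal.ofReal_le_ofReal
              (tailPart_le_add_tailPart (le_max_right _ _) _)).trans ENNReal.ofReal_add_le
        _ ≤ ENNReal.ofReal t₀ * μ Set.univ + M / ENNReal.ofReal (φ t₀) := by
            rw [lintegral_add_left measurable_const, lintegral_const]
            gcongr
            exact hmarkov k t₀ le_rfl
    refine ENNReal.div_ne_top (ne_top_of_le_ne_top ?_ hbound) (by simp)
    exact ENNReal.add_ne_top.2 ⟨ENNReal.mul_ne_top ENNReal.ofReal_ne_top (measure_ne_top _ _),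
      ENNReal.div_ne_top hM (ENNReal.ofReal_pos.2 (hφ_pos' t₀ le_rfl)).ne'⟩
  · rw [ENNReal.tsum_mul_left]
    exact ENNReal.mul_ne_top hM ((summable_nat_add_iff 1).2 hφ_sum).tsum_ofReal_ne_top
  · filter_upwards [eventually_ge_atTop ⌈t₀⌉₊] with k hk
    have ht : t₀ ≤ ((k + 1 : ℕ) : ℝ) :=
      (Nat.le_ceil t₀).trans (by exact_mod_cast hk.trans k.le_succ)
    calc (∫⁻ ω, ENNReal.ofReal (tailPart (k + 1) (f k ω)) ∂μ) / (k + 1)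
        ≤ M / ENNReal.ofReal (φ (k + 1 : ℕ)) / (k + 1) :=
          ENNReal.div_le_div_right (by exact_mod_cast hmarkov k _ ht) _
      _ = M * ENNReal.ofReal (1 / ((k + 1 : ℕ) * φ (k + 1 : ℕ))) := by
          rw [one_div, ENNReal.ofReal_inv_of_pos (mul_pos (by positivity) (hφ_pos' _ ht)),
            ENNReal.ofReal_mul (by positivity), ENNReal.ofReal_natCast,
            ENNReal.mul_inv (by simp) (by simp), div_eq_mul_inv, div_eq_mul_inv, mul_assoc,
            mul_comm (ENNReal.ofReal _)⁻¹]
          push_cast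
          rfl

end

theorem urn_tail_condexp_cesaro_general
    {Ω : Type} {m0 : MeasurableSpace Ω} {μ : Measure Ω} [IsProbabilityMeasure μ]
    {K : ℕ}
    (F : Filtration ℕ m0)
    (R : ℕ → Ω → Fin K → Fin K → ℝ)
    -- adaptedness to the filtration `F_n = σ(C_0, (R_m, χ_m)_{m ≤ n})`
    (hRmeas : ∀ n, Measurable[F n] (R n))
    -- (i) Assumption 2(a) with `E(R log_+ R) < ∞`, or (ii) Assumption 2(b)
    (hA2 :
      (∃ c : ℝ, 0 < c ∧ ∃ Rmaj : Ω → ℝ, Measurable Rmaj ∧ (∀ ω, 0 < Rmaj ω) ∧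
        Integrable Rmaj μ ∧
        Integrable (fun ω => Rmaj ω * max (Real.log (Rmaj ω)) 0) μ ∧
        ∀ n, 1 ≤ n → ∀ x : ℝ, 0 < x →
          μ {ω | x < matNorm (R n ω)} ≤ ENNReal.ofReal c * μ {ω | x < Rmaj ω}) ∨
      (∃ φ : ℝ → ℝ, (∀ x, 0 ≤ x → 0 ≤ φ x) ∧
        (∃ x₀ : ℝ, ∀ x, x₀ ≤ x → 0 < φ x) ∧
        (∃ x₀ : ℝ, ∀ x y, x₀ ≤ x → x ≤ y → φ x ≤ φ y) ∧
        (Summable fun n : ℕ => 1 / (n * φ n)) ∧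
        (∃ x₀ : ℝ, ∀ x y, x₀ ≤ x → x ≤ y → x / φ x ≤ y / φ y) ∧
        (∃ M : ℝ≥0∞, M < ⊤ ∧ ∀ n, 1 ≤ n →
          ∫⁻ ω, ENNReal.ofReal (matNorm (R n ω) * φ (matNorm (R n ω))) ∂μ ≤ M))) :
    ∀ᵐ ω ∂μ, Tendsto (fun n : ℕ =>
        (n : ℝ)⁻¹ * ∑ k ∈ Finset.Icc 1 n,
          (μ[fun ω' => matNorm (R k ω') *
            (if (k : ℝ) < matNorm (R k ω') then 1 else 0) | F (k-1)]) ω)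
      atTop (𝓝 0) := by
  set f : ℕ → Ω → ℝ := fun k ω => matNorm (R (k + 1) ω)
  have hf_meas : ∀ k, Measurable (f k) := fun k =>
    measurable_matNorm.comp ((hRmeas (k + 1)).mono (F.le _) le_rfl)
  have hsum : ∑' k : ℕ, (∫⁻ ω, ENNReal.ofReal (tailPart (k + 1) (f k ω)) ∂μ) / (k + 1) ≠ ⊤ := by
    rcases hA2 with ⟨c, -, g, -, -, hg, hg_log, hfg⟩ |
      ⟨φ, -, hφ_pos, hφ_mono, hφ_sum, -, M, hM, hfM⟩
    · exact tsum_lintegral_tailPart_div_ne_top_of_meas_lt_le (fun k => (hf_meas k).aemeasurable)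
        hg hg_log ENNReal.ofReal_ne_top fun k => hfg (k + 1) k.succ_pos
    · exact tsum_lintegral_tailPart_div_ne_top_of_lintegral_le hφ_pos hφ_mono hφ_sum hM.ne
        fun k => hfM (k + 1) k.succ_pos
  filter_upwards [ae_tendsto_inv_mul_sum_condExp (Y := fun k ω => tailPart (k + 1) (f k ω))
    F.le (fun k ω => tailPart_nonneg (by positivity) (f k ω))
    (fun k => ((measurable_tailPart _).comp (hf_meas k)).aestronglyMeasurable) hsum] with ω hω
  simp only [Finset.sum_Icc_one_eq_sum_range, Nat.add_sub_cancel, Nat.cast_add, Nat.cast_one]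
  exact hω

/-- **Proposition.**  In an urn model satisfying Assumption 1 and either (i) the
majorization Assumption 2(a) with `E(R log_+ R) < ∞`, or (ii) Assumption 2(b), the tail
conditional expectations are Cesaro negligible:
`(1/n) Σ_{k=1}^n E[‖R_k‖ 1{‖R_k‖ > k} | F_{k−1}] → 0` almost surely. -/
theorem urn_tail_condexp_cesaro
    {Ω : Type} {m0 : MeasurableSpace Ω} {μ : Measure Ω} [IsProbabilityMeasure μ]
    {K : ℕ} (hK : 0 < K)
    (F : Filtration ℕ m0)
    (C : ℕ → Ω → Fin K → ℝ) (R : ℕ → Ω → Fin K → Fin K → ℝ) (χ : ℕ → Ω → Fin K)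
    (S : ℕ → Ω → ℝ) (hS : ∀ n ω, S n ω = ∑ i, C n ω i)
    (N : ℕ → Ω → Fin K → ℝ)
    (hN : ∀ n ω i, N n ω i = ∑ m ∈ Finset.Icc 1 n, (if χ m ω = i then (1:ℝ) else 0))
    -- evolution of the composition vector and nonnegativity of replacements
    (hEvol : ∀ n, 1 ≤ n → ∀ ω j, C n ω j = C (n-1) ω j + R n ω (χ n ω) j)
    (hRnonneg : ∀ n, 1 ≤ n → ∀ ω i j, 0 ≤ R n ω i j)
    -- adaptedness to the filtration `F_n = σ(C_0, (R_m, χ_m)_{m ≤ n})`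
    (hC0meas : Measurable[F 0] (C 0))
    (hχmeas : ∀ n, Measurable[F n] (χ n))
    (hRmeas : ∀ n, Measurable[F n] (R n))
    (hRint : ∀ n, 1 ≤ n → ∀ i j, Integrable (fun ω => R n ω i j) μ)
    -- Assumption 1
    (hC0nonneg : ∀ ω i, 0 ≤ C 0 ω i)
    (hC0ne : ∀ ω, C 0 ω ≠ 0)
    (hC0int : ∀ i, Integrable (fun ω => C 0 ω i) μ)
    (hCond : ∀ n, 1 ≤ n → ∀ i,
      μ[fun ω => (if χ n ω = i then (1:ℝ) else 0) | F (n-1)]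
        =ᵐ[μ] fun ω => C (n-1) ω i / S (n-1) ω)
    (hCondIndep : ∀ n, 1 ≤ n → ∀ (i : Fin K) (B : Set (Fin K → Fin K → ℝ)),
      MeasurableSet B →
      μ[fun ω => (if χ n ω = i then (1:ℝ) else 0) * Set.indicator B 1 (R n ω) | F (n-1)]
        =ᵐ[μ] fun ω =>
          (μ[fun ω' => (if χ n ω' = i then (1:ℝ) else 0) | F (n-1)]) ω *
          (μ[fun ω' => Set.indicator B 1 (R n ω') | F (n-1)]) ω)
    -- (i) Assumption 2(a) with `E(R log_+ R) < ∞`, or (ii) Assumption 2(b)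
    (hA2 :
      (∃ c : ℝ, 0 < c ∧ ∃ Rmaj : Ω → ℝ, Measurable Rmaj ∧ (∀ ω, 0 < Rmaj ω) ∧
        Integrable Rmaj μ ∧
        Integrable (fun ω => Rmaj ω * max (Real.log (Rmaj ω)) 0) μ ∧
        ∀ n, 1 ≤ n → ∀ x : ℝ, 0 < x →
          μ {ω | x < matNorm (R n ω)} ≤ ENNReal.ofReal c * μ {ω | x < Rmaj ω}) ∨
      (∃ φ : ℝ → ℝ, (∀ x, 0 ≤ x → 0 ≤ φ x) ∧
        (∃ x₀ : ℝ, ∀ x, x₀ ≤ x → 0 < φ x) ∧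
        (∃ x₀ : ℝ, ∀ x y, x₀ ≤ x → x ≤ y → φ x ≤ φ y) ∧
        (Summable fun n : ℕ => 1 / (n * φ n)) ∧
        (∃ x₀ : ℝ, ∀ x y, x₀ ≤ x → x ≤ y → x / φ x ≤ y / φ y) ∧
        (∃ M : ℝ≥0∞, M < ⊤ ∧ ∀ n, 1 ≤ n →
          ∫⁻ ω, ENNReal.ofReal (matNorm (R n ω) * φ (matNorm (R n ω))) ∂μ ≤ M))) :
    ∀ᵐ ω ∂μ, Tendsto (fun n : ℕ =>
        (n : ℝ)⁻¹ * ∑ k ∈ Finset.Icc 1 n,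
          (μ[fun ω' => matNorm (R k ω') *
            (if (k : ℝ) < matNorm (R k ω') then 1 else 0) | F (k-1)]) ω)
      atTop (𝓝 0) :=
  urn_tail_condexp_cesaro_general F R hRmeas hA2

end
end

section
/- Fix d ≥ 1, p, q ∈ (0,1) and a > 0. Let R be the (d+1)×(d+1) matrix (rows and columns indexed 0,1,…,d) with row 0 equal to (1 + pa, (1−p)a/d, …, (1−p)a/d) and, for each i = 1,…,d, row i having entry 1−q in column 0, entry q+a in column i, and 0 elsewhere. Then R is irreducible, its dominant (Perron–Frobenius) eigenvalue equals 1+a, and the left eigenvector of R for the eigenvalue 1+a, normalized to be a probability vector, equals (1/(d(1−q+a(1−p))))·( d(1−q), a(1−p), …, a(1−p) ). -/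
open Matrix

/-!
All row sums of `R` equal `1 + a`, so `R 𝟙 = (1 + a) 𝟙` and, by Gershgorin's theorem, every
complex eigenvalue has modulus at most `1 + a`. Column `0` and row `0` are strictly positive,
hence so is `R ^ 2`. A left eigenvector `v` for `1 + a` satisfies, in column `k ≥ 1`,
`(1 - q) v k = (1 - p) a / d · v 0`, so it is determined by `v 0`, and then by its sum.
-/

theorem Matrix.sq_apply_pos_of_col_pos_of_row_pos {n α : Type*} [Fintype n] [DecidableEq n]
    [Semiring α] [PartialOrder α] [IsStrictOrderedRing α]
    {A : Matrix n n α} (hA : ∀ i j, 0 ≤ A i j) (k : n)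
    (hcol : ∀ i, 0 < A i k) (hrow : ∀ j, 0 < A k j) (i j : n) : 0 < (A ^ 2) i j := by
  rw [sq, mul_apply]
  exact Finset.sum_pos' (fun l _ => mul_nonneg (hA i l) (hA l j))
    ⟨k, Finset.mem_univ _, mul_pos (hcol i) (hrow j)⟩

section RowSums

variable {n K : Type*} [Fintype n] [DecidableEq n]

theorem Matrix.mem_spectrum_of_sum_row_eq [Field K] [Nonempty n] {A : Matrix n n K} {r : K}
    (hrow : ∀ i, ∑ j, A i j = r) : r ∈ spectrum K A := by
  have hA1 : A *ᵥ 1 = r • 1 := funext fun i => by simp [mulVec, dotProduct, hrow]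
  rw [← spectrum_toLin']
  exact Module.End.HasEigenvalue.mem_spectrum <| Module.End.hasEigenvalue_of_hasEigenvector
    ⟨Module.End.mem_eigenspace_iff.mpr hA1, one_ne_zero⟩

theorem Matrix.norm_le_of_mem_spectrum [NormedField K] {A : Matrix n n K} {r : ℝ}
    (hrow : ∀ i, ∑ j, ‖A i j‖ ≤ r) {z : K} (hz : z ∈ spectrum K A) : ‖z‖ ≤ r := by
  rw [← spectrum_toLin', ← Module.End.hasEigenvalue_iff_mem_spectrum] at hz
  obtain ⟨k, hk⟩ := eigenvalue_mem_ball hz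
  rw [Metric.mem_closedBall, dist_eq_norm] at hk
  calc ‖z‖ ≤ ‖A k k‖ + ‖z - A k k‖ := norm_le_norm_add_norm_sub' z (A k k)
    _ ≤ ‖A k k‖ + ∑ j ∈ Finset.univ.erase k, ‖A k j‖ := by gcongr
    _ = ∑ j, ‖A k j‖ := Finset.add_sum_erase _ (fun j => ‖A k j‖) (Finset.mem_univ k)
    _ ≤ r := hrow k

theorem Matrix.norm_le_of_mem_spectrum_map_ofReal {A : Matrix n n ℝ} (hA : ∀ i j, 0 ≤ A i j)
    {r : ℝ} (hrow : ∀ i, ∑ j, A i j ≤ r) {z : ℂ} (hz : z ∈ spectrum ℂ (A.map Complex.ofReal)) :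
    ‖z‖ ≤ r :=
  norm_le_of_mem_spectrum (fun i => by
    simpa only [map_apply, Complex.norm_real, Real.norm_of_nonneg (hA i _)] using hrow i) hz

end RowSums

namespace DelayedERW

noncomputable def meanMatrix (d : ℕ) (p q a : ℝ) : Matrix (Fin (d+1)) (Fin (d+1)) ℝ :=
  of fun i j => if i = 0 then (if j = 0 then 1 + p * a else (1 - p) * a / d)
    else if j = 0 then 1 - q else if j = i then q + a else 0

noncomputable def leftPerronVector (d : ℕ) (p q a : ℝ) : Fin (d+1) → ℝ :=
  fun i => (1 / (d * (1 - q + a * (1 - p)))) * (if i = 0 then (d : ℝ) * (1 - q) else a * (1 - p))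

variable {d : ℕ} {p q a : ℝ}

@[simp] theorem meanMatrix_zero_zero : meanMatrix d p q a 0 0 = 1 + p * a := rfl

@[simp] theorem meanMatrix_zero_succ (k : Fin d) :
    meanMatrix d p q a 0 k.succ = (1 - p) * a / d := by
  simp [meanMatrix]

@[simp] theorem meanMatrix_succ_zero (k : Fin d) : meanMatrix d p q a k.succ 0 = 1 - q := by
  simp [meanMatrix]

@[simp] theorem meanMatrix_succ_succ (k l : Fin d) :
    meanMatrix d p q a k.succ l.succ = if l = k then q + a else 0 := by
  simp [meanMatrix]

@[simp] theorem leftPerronVector_zero :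
    leftPerronVector d p q a 0 = 1 / (d * (1 - q + a * (1 - p))) * (d * (1 - q)) := rfl

@[simp] theorem leftPerronVector_succ (k : Fin d) :
    leftPerronVector d p q a k.succ = 1 / (d * (1 - q + a * (1 - p))) * (a * (1 - p)) := by
  simp [leftPerronVector]

theorem meanMatrix_nonneg (hp₀ : 0 ≤ p) (hp₁ : p ≤ 1) (hq₀ : 0 ≤ q) (hq₁ : q ≤ 1) (ha : 0 ≤ a)
    (i j : Fin (d+1)) : 0 ≤ meanMatrix d p q a i j := by
  have : 0 ≤ (1 - p) * a / d := by have := sub_nonneg.2 hp₁; positivity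
  simp only [meanMatrix, of_apply]
  split_ifs <;> nlinarith

theorem meanMatrix_apply_zero_pos (hp₀ : 0 ≤ p) (hq₁ : q < 1) (ha : 0 ≤ a) (i : Fin (d+1)) :
    0 < meanMatrix d p q a i 0 := by
  cases i using Fin.cases with
  | zero => rw [meanMatrix_zero_zero]; nlinarith
  | succ k => rw [meanMatrix_succ_zero]; linarith

theorem meanMatrix_zero_apply_pos (hp₀ : 0 ≤ p) (hp₁ : p < 1) (ha : 0 < a) (j : Fin (d+1)) :
    0 < meanMatrix d p q a 0 j := by
  cases j using Fin.cases with
  | zero => rw [meanMatrix_zero_zero]; nlinarith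
  | succ k =>
    have : (0 : ℝ) < d := by exact_mod_cast k.pos
    have := sub_pos.2 hp₁
    rw [meanMatrix_zero_succ]
    positivity

theorem sum_meanMatrix_row (hd : 0 < d) (i : Fin (d+1)) :
    ∑ j, meanMatrix d p q a i j = 1 + a := by
  have : (d : ℝ) ≠ 0 := by positivity
  cases i using Fin.cases with
  | zero =>
    simp only [Fin.sum_univ_succ, meanMatrix_zero_zero, meanMatrix_zero_succ,
      Finset.sum_const, Finset.card_univ, Fintype.card_fin, nsmul_eq_mul]
    field_simp
    ring
  | succ k =>
    simp only [Fin.sum_univ_succ, meanMatrix_succ_zero, meanMatrix_succ_succ,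
      Finset.sum_ite_eq', Finset.mem_univ, if_true]
    ring

theorem vecMul_meanMatrix_zero (v : Fin (d+1) → ℝ) :
    (v ᵥ* meanMatrix d p q a) 0 = v 0 * (1 + p * a) + (∑ k : Fin d, v k.succ) * (1 - q) := by
  simp [vecMul, dotProduct, Fin.sum_univ_succ, Finset.sum_mul]

theorem vecMul_meanMatrix_succ (v : Fin (d+1) → ℝ) (k : Fin d) :
    (v ᵥ* meanMatrix d p q a) k.succ = v 0 * ((1 - p) * a / d) + v k.succ * (q + a) := by
  simp [vecMul, dotProduct, Fin.sum_univ_succ]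

theorem vecMul_leftPerronVector :
    leftPerronVector d p q a ᵥ* meanMatrix d p q a = (1 + a) • leftPerronVector d p q a := by
  ext j
  cases j using Fin.cases with
  | zero =>
    simp only [vecMul_meanMatrix_zero, leftPerronVector_zero, leftPerronVector_succ,
      Finset.sum_const, Finset.card_univ, Fintype.card_fin, nsmul_eq_mul,
      Pi.smul_apply, smul_eq_mul]
    ring
  | succ k =>
    have : (d : ℝ) ≠ 0 := by have := k.pos; positivity
    simp only [vecMul_meanMatrix_succ, leftPerronVector_zero, leftPerronVector_succ,
      Pi.smul_apply, smul_eq_mul]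
    field_simp
    ring

theorem leftPerronVector_pos (hd : 0 < d) (hp₁ : p < 1) (hq₁ : q < 1) (ha : 0 < a)
    (i : Fin (d+1)) : 0 < leftPerronVector d p q a i := by
  have : (0 : ℝ) < d := by exact_mod_cast hd
  have := sub_pos.2 hp₁
  have := sub_pos.2 hq₁
  cases i using Fin.cases
  · rw [leftPerronVector_zero]; positivity
  · rw [leftPerronVector_succ]; positivity

theorem sum_leftPerronVector (hd : 0 < d) (hp₁ : p ≤ 1) (hq₁ : q < 1) (ha : 0 ≤ a) :
    ∑ i, leftPerronVector d p q a i = 1 := by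
  have : (d : ℝ) ≠ 0 := by positivity
  have : 1 - q + a * (1 - p) ≠ 0 := by nlinarith
  simp only [Fin.sum_univ_succ, leftPerronVector_zero, leftPerronVector_succ,
    Finset.sum_const, Finset.card_univ, Fintype.card_fin, nsmul_eq_mul]
  field_simp

theorem eq_zero_of_vecMul_meanMatrix_eq_smul (hd : 0 < d) (hp₁ : p ≤ 1) (hq₁ : q < 1)
    (ha : 0 ≤ a) {w : Fin (d+1) → ℝ} (hw : w ᵥ* meanMatrix d p q a = (1 + a) • w)
    (hsum : ∑ i, w i = 0) : w = 0 := by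
  have hd' : (d : ℝ) ≠ 0 := by positivity
  have hcol (k : Fin d) : w k.succ * (1 - q) = w 0 * ((1 - p) * a / d) := by
    have := congrFun hw k.succ
    rw [vecMul_meanMatrix_succ, Pi.smul_apply, smul_eq_mul] at this
    linarith
  have hw₀ : w 0 = 0 := by
    rw [Fin.sum_univ_succ] at hsum
    have : w 0 * (1 - q + a * (1 - p)) = 0 := by
      have := congrArg (· * (1 - q)) hsum
      simp only [add_mul, Finset.sum_mul, hcol, Finset.sum_const, Finset.card_univ,
        Fintype.card_fin, nsmul_eq_mul, zero_mul] at this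
      field_simp at this
      linear_combination this
    exact (mul_eq_zero.1 this).resolve_right (by nlinarith)
  ext i
  cases i using Fin.cases with
  | zero => exact hw₀
  | succ k => simpa [hw₀, (sub_pos.2 hq₁).ne'] using hcol k

end DelayedERW

open DelayedERW in
/-- **Lemma (mean replacement matrix of the delayed ERW).**
For `d ≥ 1`, `p, q ∈ (0,1)` and `a > 0`, the `(d+1)×(d+1)` matrix `R` with row `0` equal to
`(1+pa, (1−p)a/d, …, (1−p)a/d)` and, for `i ≥ 1`, row `i` having entry `1−q` in column `0`,
`q+a` in column `i` and `0` elsewhere, is irreducible; its dominant (Perron–Frobenius)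
eigenvalue equals `1+a`, and its left eigenvector for `1+a`, normalized to a probability
vector, is `(1/(d(1−q+a(1−p))))·(d(1−q), a(1−p), …, a(1−p))`. -/
theorem erw_mean_matrix_perron_frobenius
    (d : ℕ) (hd : 1 ≤ d) (p q a : ℝ)
    (hp : 0 < p ∧ p < 1) (hq : 0 < q ∧ q < 1) (ha : 0 < a)
    (R : Matrix (Fin (d+1)) (Fin (d+1)) ℝ)
    (hR : ∀ i j, R i j =
      if i = 0 then (if j = 0 then 1 + p * a else (1 - p) * a / d)
      else if j = 0 then 1 - q else if j = i then q + a else 0)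
    (π : Fin (d+1) → ℝ)
    (hπ : ∀ i, π i = (1 / (d * (1 - q + a * (1 - p)))) *
      (if i = 0 then (d : ℝ) * (1 - q) else a * (1 - p))) :
    -- irreducibility
    (∀ i j, ∃ N : ℕ, 1 ≤ N ∧ 0 < (R ^ N) i j) ∧
    -- `1 + a` is an eigenvalue and dominates the real part of every eigenvalue
    ((1 + a : ℂ) ∈ spectrum ℂ (R.map (Complex.ofReal)) ∧
      ∀ z ∈ spectrum ℂ (R.map (Complex.ofReal)), z.re ≤ 1 + a) ∧
    -- `π` is the normalized strictly positive left eigenvector for `1 + a` …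
    (Matrix.vecMul π R = (1 + a) • π ∧ (∀ i, 0 < π i) ∧ ∑ i, π i = 1) ∧
    -- … and it is the unique such vector
    (∀ v : Fin (d+1) → ℝ,
      Matrix.vecMul v R = (1 + a) • v → (∀ i, 0 < v i) → (∑ i, v i = 1) → v = π) := by
  obtain ⟨hp₀, hp₁⟩ := hp
  obtain ⟨hq₀, hq₁⟩ := hq
  obtain rfl : R = meanMatrix d p q a := Matrix.ext hR
  obtain rfl : π = leftPerronVector d p q a := funext hπ
  have hnonneg := meanMatrix_nonneg (d := d) hp₀.le hp₁.le hq₀.le hq₁.le ha.le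
  have hrow := sum_meanMatrix_row (p := p) (q := q) (a := a) hd
  have hsumπ := sum_leftPerronVector hd hp₁.le hq₁ ha.le
  refine ⟨fun i j => ⟨2, one_le_two, ?_⟩, ⟨?_, fun z hz => ?_⟩,
    ⟨vecMul_leftPerronVector, leftPerronVector_pos hd hp₁ hq₁ ha, hsumπ⟩, fun v hv _ hsum => ?_⟩
  · exact sq_apply_pos_of_col_pos_of_row_pos hnonneg 0
      (meanMatrix_apply_zero_pos hp₀.le hq₁ ha.le) (meanMatrix_zero_apply_pos hp₀.le hp₁ ha) i j
  · exact mem_spectrum_of_sum_row_eq fun i => by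
      simp only [map_apply, ← Complex.ofReal_sum, hrow, Complex.ofReal_add, Complex.ofReal_one]
  · exact (Complex.re_le_norm z).trans <|
      norm_le_of_mem_spectrum_map_ofReal hnonneg (fun i => (hrow i).le) hz
  · refine sub_eq_zero.mp (eq_zero_of_vecMul_meanMatrix_eq_smul hd hp₁.le hq₁ ha.le ?_ ?_)
    · rw [sub_vecMul, hv, vecMul_leftPerronVector, smul_sub]
    · simp only [Pi.sub_apply, Finset.sum_sub_distrib, hsum, hsumπ, sub_self]
end
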